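/- arXiv:1512.06142 — 5 statements merged into one kernel-verified Lean document; each statement's English description precedes it below -/
import Mathlib

section
/- Let A = {a_1,...,a_n} be a finite set of points in R^m, and let Δ denote the standard simplex in R^n. For x, z in Δ with A(x−z) ≠ 0 and d = A(x−z)/‖A(x−z)‖, the quantity Φ(A,x,z) := min over p with ⟨p,d⟩=1 of max over s in S(x), a in A of ⟨p, s−a⟩ equals the maximum λ > 0 such that there exist w, y in Δ with supp(w) ⊆ supp(x) and A(w−y) = λ d. (Here S(x) = {a_i : x_i > 0} and A is identified with the m×n matrix of columns a_i.) -/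
open scoped RealInnerProductSpace BigOperators

/-- `A x` viewed as a point of Euclidean space, for `A ∈ ℝ^{m×n}`. -/
noncomputable def Amul {m n : ℕ} (A : Matrix (Fin m) (Fin n) ℝ) (x : Fin n → ℝ) :
    EuclideanSpace ℝ (Fin m) := WithLp.toLp 2 (fun i => ∑ j, A i j * x j)

/-- The `j`-th column (atom) `a_j` of `A`. -/
noncomputable def col {m n : ℕ} (A : Matrix (Fin m) (Fin n) ℝ) (j : Fin n) :
    EuclideanSpace ℝ (Fin m) := WithLp.toLp 2 (fun i => A i j)

/-- `max_{s ∈ S(x), a ∈ A} ⟨p, s - a⟩`. -/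
noncomputable def maxGap {m n : ℕ} (A : Matrix (Fin m) (Fin n) ℝ) (x : Fin n → ℝ)
    (p : EuclideanSpace ℝ (Fin m)) : ℝ :=
  sSup {t | ∃ i j : Fin n, 0 < x i ∧ t = ⟪p, col A i - col A j⟫}

/-- `Φ(A,x,z) = min_{⟨p,d⟩ = 1} max_{s ∈ S(x), a ∈ A} ⟨p, s - a⟩`
where `d = A(x-z)/‖A(x-z)‖`. -/
noncomputable def phi {m n : ℕ} (A : Matrix (Fin m) (Fin n) ℝ) (x z : Fin n → ℝ) : ℝ :=
  sInf {r | ∃ p : EuclideanSpace ℝ (Fin m),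
    ⟪p, (‖Amul A x - Amul A z‖)⁻¹ • (Amul A x - Amul A z)⟫ = 1 ∧ r = maxGap A x p}

lemma Amul_eq_sum {m n : ℕ} (A : Matrix (Fin m) (Fin n) ℝ) (w : Fin n → ℝ) :
    Amul A w = ∑ j, w j • col A j := by
  ext i
  rw [show ((∑ j, w j • col A j : EuclideanSpace ℝ (Fin m)) i) = ∑ j, (w j • col A j) i from
    by rw [WithLp.ofLp_sum]; exact Finset.sum_apply i Finset.univ _]
  simp [Amul, col, mul_comm]

lemma inner_Amul {m n : ℕ} (A : Matrix (Fin m) (Fin n) ℝ) (p : EuclideanSpace ℝ (Fin m))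
    (w : Fin n → ℝ) : ⟪p, Amul A w⟫ = ∑ j, w j * ⟪p, col A j⟫ := by
  rw [Amul_eq_sum, inner_sum]
  exact Finset.sum_congr rfl fun j _ => real_inner_smul_right _ _ _

lemma Amul_single {m n : ℕ} (A : Matrix (Fin m) (Fin n) ℝ) (i : Fin n) :
    Amul A (fun j => if i = j then 1 else 0) = col A i := by
  ext k
  simp [Amul, col]

lemma Amul_comb {m n : ℕ} (A : Matrix (Fin m) (Fin n) ℝ) (a b : ℝ) (w y : Fin n → ℝ) :
    Amul A (a • w + b • y) = a • Amul A w + b • Amul A y := by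
  ext i
  simp only [Amul, PiLp.add_apply, PiLp.smul_apply, smul_eq_mul, Pi.add_apply, Pi.smul_apply,
    Finset.mul_sum]
  rw [← Finset.sum_add_distrib]
  exact Finset.sum_congr rfl fun j _ => by ring

lemma continuous_Amul {m n : ℕ} (A : Matrix (Fin m) (Fin n) ℝ) : Continuous (Amul A) := by
  have : Amul A = fun w => ∑ j, w j • col A j := funext fun w => Amul_eq_sum A w
  rw [this]
  exact continuous_finset_sum _ fun j _ => (continuous_apply j).smul continuous_const

/-- The compact convex set `conv S(x) - conv A`. -/
def Kset {m n : ℕ} (A : Matrix (Fin m) (Fin n) ℝ) (x : Fin n → ℝ) :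
    Set (EuclideanSpace ℝ (Fin m)) :=
  {v | ∃ w ∈ stdSimplex ℝ (Fin n), ∃ y ∈ stdSimplex ℝ (Fin n),
    {i | w i ≠ 0} ⊆ {i | x i ≠ 0} ∧ v = Amul A w - Amul A y}

lemma Kset_convex {m n : ℕ} (A : Matrix (Fin m) (Fin n) ℝ) (x : Fin n → ℝ) :
    Convex ℝ (Kset A x) := by
  rintro v1 ⟨w1, hw1, y1, hy1, hs1, rfl⟩ v2 ⟨w2, hw2, y2, hy2, hs2, rfl⟩ a b ha hb hab
  refine ⟨a • w1 + b • w2, convex_stdSimplex ℝ _ hw1 hw2 ha hb hab,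
    a • y1 + b • y2, convex_stdSimplex ℝ _ hy1 hy2 ha hb hab, ?_, ?_⟩
  · intro i hi
    simp only [Set.mem_setOf_eq, Pi.add_apply, Pi.smul_apply, smul_eq_mul] at hi ⊢
    by_contra hxi
    have h1 : w1 i = 0 := by
      by_contra h; exact (hs1 h) hxi
    have h2 : w2 i = 0 := by
      by_contra h; exact (hs2 h) hxi
    rw [h1, h2] at hi; simp at hi
  · rw [Amul_comb, Amul_comb]
    module

lemma Kset_isClosed {m n : ℕ} (A : Matrix (Fin m) (Fin n) ℝ) (x : Fin n → ℝ) :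
    IsClosed (Kset A x) := by
  have hC : IsClosed {w : Fin n → ℝ | ∀ i, x i = 0 → w i = 0} := by
    have : {w : Fin n → ℝ | ∀ i, x i = 0 → w i = 0} =
        ⋂ i, {w : Fin n → ℝ | x i = 0 → w i = 0} := by
      ext w; simp
    rw [this]
    refine isClosed_iInter fun i => ?_
    by_cases h : x i = 0
    · have : {w : Fin n → ℝ | x i = 0 → w i = 0} = (fun w : Fin n → ℝ => w i) ⁻¹' {0} := by
        ext w; simp [h]
      rw [this]
      exact (isClosed_singleton).preimage (continuous_apply i)
    · have : {w : Fin n → ℝ | x i = 0 → w i = 0} = Set.univ := by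
        ext w; simp [h]
      rw [this]; exact isClosed_univ
  have hD : IsCompact ((stdSimplex ℝ (Fin n) ∩ {w | ∀ i, x i = 0 → w i = 0}) ×ˢ
      stdSimplex ℝ (Fin n)) :=
    ((isCompact_stdSimplex ℝ (Fin n)).inter_right hC).prod (isCompact_stdSimplex ℝ (Fin n))
  have hcont : Continuous fun wy : (Fin n → ℝ) × (Fin n → ℝ) => Amul A wy.1 - Amul A wy.2 :=
    ((continuous_Amul A).comp continuous_fst).sub ((continuous_Amul A).comp continuous_snd)
  have himg : Kset A x = (fun wy : (Fin n → ℝ) × (Fin n → ℝ) => Amul A wy.1 - Amul A wy.2) ''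
      ((stdSimplex ℝ (Fin n) ∩ {w | ∀ i, x i = 0 → w i = 0}) ×ˢ stdSimplex ℝ (Fin n)) := by
    ext v
    constructor
    · rintro ⟨w, hw, y, hy, hs, rfl⟩
      exact ⟨(w, y), ⟨⟨hw, fun i hxi => by
        by_contra h; exact (hs h) hxi⟩, hy⟩, rfl⟩
    · rintro ⟨⟨w, y⟩, ⟨⟨hw, hsupp⟩, hy⟩, rfl⟩
      exact ⟨w, hw, y, hy, fun i hi => fun hxi => hi (hsupp i hxi), rfl⟩
  rw [himg]
  exact (hD.image hcont).isClosed

lemma maxGap_bddAbove {m n : ℕ} (A : Matrix (Fin m) (Fin n) ℝ) (x : Fin n → ℝ)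
    (p : EuclideanSpace ℝ (Fin m)) :
    BddAbove {t | ∃ i j : Fin n, 0 < x i ∧ t = ⟪p, col A i - col A j⟫} := by
  refine Set.Finite.bddAbove (Set.Finite.subset
    (Set.finite_range fun ij : Fin n × Fin n => ⟪p, col A ij.1 - col A ij.2⟫) ?_)
  rintro t ⟨i, j, _, rfl⟩
  exact ⟨(i, j), rfl⟩

lemma inner_sub_le_maxGap {m n : ℕ} (A : Matrix (Fin m) (Fin n) ℝ) (x : Fin n → ℝ)
    (hx : x ∈ stdSimplex ℝ (Fin n)) {w y : Fin n → ℝ}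
    (hw : w ∈ stdSimplex ℝ (Fin n)) (hy : y ∈ stdSimplex ℝ (Fin n))
    (hsupp : {i | w i ≠ 0} ⊆ {i | x i ≠ 0}) (p : EuclideanSpace ℝ (Fin m)) :
    ⟪p, Amul A w - Amul A y⟫ ≤ maxGap A x p := by
  classical
  set c : Fin n → ℝ := fun j => ⟪p, col A j⟫ with hc
  set M := maxGap A x p with hM
  have hy1 : ∑ j, y j = 1 := hy.2
  have hw1 : ∑ i, w i = 1 := hw.2
  have key : ⟪p, Amul A w - Amul A y⟫ = ∑ i, ∑ j, w i * y j * (c i - c j) := by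
    rw [inner_sub_right, inner_Amul, inner_Amul]
    have step : ∀ i, ∑ j, w i * y j * (c i - c j) = w i * c i - w i * ∑ j, y j * c j := by
      intro i
      calc ∑ j, w i * y j * (c i - c j)
          = ∑ j, ((w i * c i) * y j - w i * (y j * c j)) :=
            Finset.sum_congr rfl fun j _ => by ring
        _ = (w i * c i) * ∑ j, y j - w i * ∑ j, y j * c j := by
            rw [Finset.sum_sub_distrib, ← Finset.mul_sum, ← Finset.mul_sum]
        _ = w i * c i - w i * ∑ j, y j * c j := by rw [hy1, mul_one]
    rw [Finset.sum_congr rfl fun i _ => step i, Finset.sum_sub_distrib, ← Finset.sum_mul, hw1,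
      one_mul]
  rw [key]
  have hbound : ∀ i j : Fin n, w i * y j * (c i - c j) ≤ w i * y j * M := by
    intro i j
    by_cases hwi : w i = 0
    · simp [hwi]
    · have hxi : 0 < x i := lt_of_le_of_ne (hx.1 i) (Ne.symm (hsupp hwi))
      have hcm : c i - c j ≤ M := by
        refine le_csSup (maxGap_bddAbove A x p) ⟨i, j, hxi, ?_⟩
        rw [inner_sub_right]
      exact mul_le_mul_of_nonneg_left hcm (mul_nonneg (hw.1 i) (hy.1 j))
  calc ∑ i, ∑ j, w i * y j * (c i - c j)
      ≤ ∑ i, ∑ j, w i * y j * M :=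
        Finset.sum_le_sum fun i _ => Finset.sum_le_sum fun j _ => hbound i j
    _ = ∑ i, (w i * M) * ∑ j, y j := Finset.sum_congr rfl fun i _ => by
        rw [Finset.mul_sum]; exact Finset.sum_congr rfl fun j _ => by ring
    _ = (∑ i, w i) * M := by rw [hy1]; simp [Finset.sum_mul]
    _ = M := by rw [hw1, one_mul]

/-- `Φ(A,x,z)` equals the maximum `λ > 0` such that there are `w, y ∈ Δ_{n-1}`
with `supp(w) ⊆ supp(x)` and `A(w - y) = λ d`. -/
theorem phi_eq_max_lambda {m n : ℕ} (A : Matrix (Fin m) (Fin n) ℝ) (x z : Fin n → ℝ)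
    (hx : x ∈ stdSimplex ℝ (Fin n)) (hz : z ∈ stdSimplex ℝ (Fin n))
    (hne : Amul A x - Amul A z ≠ 0) :
    phi A x z =
      sSup {lam : ℝ | 0 < lam ∧ ∃ w ∈ stdSimplex ℝ (Fin n), ∃ y ∈ stdSimplex ℝ (Fin n),
        {i | w i ≠ 0} ⊆ {i | x i ≠ 0} ∧
        Amul A w - Amul A y =
          lam • ((‖Amul A x - Amul A z‖)⁻¹ • (Amul A x - Amul A z))} := by
  classical
  unfold phi
  set v : EuclideanSpace ℝ (Fin m) := Amul A x - Amul A z with hv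
  set d : EuclideanSpace ℝ (Fin m) := (‖v‖)⁻¹ • v with hd
  have hvpos : (0:ℝ) < ‖v‖ := norm_pos_iff.mpr hne
  have hvne : ‖v‖ ≠ 0 := ne_of_gt hvpos
  set L := {lam : ℝ | 0 < lam ∧ ∃ w ∈ stdSimplex ℝ (Fin n), ∃ y ∈ stdSimplex ℝ (Fin n),
    {i | w i ≠ 0} ⊆ {i | x i ≠ 0} ∧ Amul A w - Amul A y = lam • d} with hL
  set P := {r : ℝ | ∃ p : EuclideanSpace ℝ (Fin m), ⟪p, d⟫ = 1 ∧ r = maxGap A x p} with hP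
  show sInf P = sSup L
  have hd1 : ⟪d, d⟫ = 1 := by
    have hnd : ‖d‖ = 1 := by
      rw [hd, norm_smul, norm_inv, norm_norm, inv_mul_cancel₀ hvne]
    rw [real_inner_self_eq_norm_sq, hnd]; norm_num
  have hLK : L = {lam : ℝ | 0 < lam ∧ lam • d ∈ Kset A x} := by
    ext lam
    simp only [hL, Set.mem_setOf_eq, Kset]
    constructor
    · rintro ⟨h1, w, hw, y, hy, hs, he⟩; exact ⟨h1, w, hw, y, hy, hs, he.symm⟩
    · rintro ⟨h1, w, hw, y, hy, hs, he⟩; exact ⟨h1, w, hw, y, hy, hs, he.symm⟩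
  have hxex : ∃ i, 0 < x i := by
    by_contra h
    push_neg at h
    have h0 : ∑ i, x i = 0 := Finset.sum_eq_zero fun i _ => le_antisymm (h i) (hx.1 i)
    rw [hx.2] at h0; norm_num at h0
  have hvd : v = ‖v‖ • d := by rw [hd, smul_inv_smul₀ hvne]
  have hl0 : ‖v‖ ∈ L := ⟨hvpos, x, hx, z, hz, subset_rfl, by rw [← hvd]⟩
  have hweak : ∀ lam ∈ L, ∀ r ∈ P, lam ≤ r := by
    rintro lam ⟨hlam, w, hw, y, hy, hsupp, heq⟩ r ⟨p, hpd, rfl⟩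
    calc lam = lam * ⟪p, d⟫ := by rw [hpd, mul_one]
      _ = ⟪p, lam • d⟫ := (real_inner_smul_right p d lam).symm
      _ = ⟪p, Amul A w - Amul A y⟫ := by rw [heq]
      _ ≤ maxGap A x p := inner_sub_le_maxGap A x hx hw hy hsupp p
  have hPne : P.Nonempty := ⟨maxGap A x d, d, hd1, rfl⟩
  have hLne : L.Nonempty := ⟨‖v‖, hl0⟩
  have hLbdd : BddAbove L := ⟨maxGap A x d, fun lam hlam => hweak lam hlam _ ⟨d, hd1, rfl⟩⟩
  have hPbdd : BddBelow P := ⟨‖v‖, fun r hr => hweak _ hl0 r hr⟩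
  refine le_antisymm ?_ (le_csInf hPne fun r hr =>
    csSup_le hLne fun lam hlam => hweak lam hlam r hr)
  refine le_of_forall_pos_le_add fun ε hε => ?_
  have hsupge : ‖v‖ ≤ sSup L := le_csSup hLbdd hl0
  set lam' : ℝ := sSup L + ε with hlam'
  have hlam'pos : 0 < lam' := by rw [hlam']; linarith
  have hnotK : lam' • d ∉ Kset A x := by
    intro hK
    have hmem : lam' ∈ L := by rw [hLK]; exact ⟨hlam'pos, hK⟩
    have := le_csSup hLbdd hmem
    rw [hlam'] at this; linarith
  obtain ⟨f, u, hfu, hux⟩ := geometric_hahn_banach_closed_point (Kset_convex A x)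
    (Kset_isClosed A x) hnotK
  set p0 : EuclideanSpace ℝ (Fin m) :=
    (InnerProductSpace.toDual ℝ (EuclideanSpace ℝ (Fin m))).symm f with hp0
  have hp0v : ∀ w : EuclideanSpace ℝ (Fin m), ⟪p0, w⟫ = f w := fun w =>
    InnerProductSpace.toDual_symm_apply
  set c : ℝ := f d with hc
  have hfsmul : ∀ a : ℝ, f (a • d) = a * c := fun a => by rw [map_smul, smul_eq_mul, ← hc]
  have hKv : v ∈ Kset A x := ⟨x, hx, z, hz, subset_rfl, hv⟩
  have hcpos : 0 < c := by
    have h1 : f v < u := hfu v hKv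
    have h2 : u < f (lam' • d) := hux
    rw [hfsmul] at h2
    have h4 : f v = ‖v‖ * c := by conv_lhs => rw [hvd, hfsmul]
    nlinarith
  set p : EuclideanSpace ℝ (Fin m) := c⁻¹ • p0 with hp
  have hpd : ⟪p, d⟫ = 1 := by
    rw [hp, real_inner_smul_left, hp0v, ← hc, inv_mul_cancel₀ (ne_of_gt hcpos)]
  obtain ⟨i0, hi0⟩ := hxex
  have hmax : maxGap A x p ≤ c⁻¹ * u := by
    refine csSup_le ⟨_, i0, i0, hi0, rfl⟩ ?_
    rintro t ⟨i, j, hxi, rfl⟩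
    have hmem : col A i - col A j ∈ Kset A x := by
      refine ⟨(fun k => if i = k then 1 else 0), ite_eq_mem_stdSimplex ℝ i,
        (fun k => if j = k then 1 else 0), ite_eq_mem_stdSimplex ℝ j, ?_, ?_⟩
      · intro k hk
        simp only [Set.mem_setOf_eq] at hk ⊢
        by_cases h : i = k
        · rw [← h]; exact ne_of_gt hxi
        · simp [h] at hk
      · rw [Amul_single, Amul_single]
    have hlt : f (col A i - col A j) < u := hfu _ hmem
    rw [← hp0v] at hlt
    calc ⟪p, col A i - col A j⟫ = c⁻¹ * ⟪p0, col A i - col A j⟫ := by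
          rw [hp, real_inner_smul_left]
      _ ≤ c⁻¹ * u := mul_le_mul_of_nonneg_left hlt.le (inv_nonneg.mpr hcpos.le)
  have hfin : c⁻¹ * u ≤ lam' := by
    have h2 : u < lam' * c := by rw [← hfsmul]; exact hux
    rw [inv_mul_le_iff₀ hcpos, mul_comm]
    exact h2.le
  exact le_trans (csInf_le hPbdd ⟨p, hpd, rfl⟩) (le_trans hmax hfin)
end

section
/- Let u, v be points of a polytope conv(A\F) and a face F respectively attaining the minimum distance between F and conv(A\F), and suppose after passing to subfaces that ⟨u−v, t−v⟩ = 0 for all t ∈ F and ⟨u−v, s−u⟩ = 0 for all s in the face G = {s ∈ conv(A\F) : ⟨u−v, s−u⟩ = 0}. Then ⟨u−v, a−v⟩ ≥ 0 for all a ∈ A. -/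
open scoped RealInnerProductSpace

/-- If `u` minimizes the distance to `v` over a convex set `K`, then for every `s ∈ K`
the vector `s - u` makes a nonnegative inner product with `u - v`. -/
lemma aux_min_inner {m : ℕ} {K : Set (EuclideanSpace ℝ (Fin m))} (hK : Convex ℝ K)
    {u v : EuclideanSpace ℝ (Fin m)} (hu : u ∈ K)
    (hmin : ∀ s ∈ K, ‖u - v‖ ≤ ‖s - v‖) :
    ∀ s ∈ K, 0 ≤ ⟪u - v, s - u⟫ := by
  intro s hs
  by_contra h
  push_neg at h
  set c : ℝ := ⟪u - v, s - u⟫ with hc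
  have hd : (0:ℝ) < ‖s - u‖ ^ 2 := by
    rcases eq_or_ne s u with rfl | hne
    · simp [hc] at h
    · have : s - u ≠ 0 := sub_ne_zero.mpr hne
      have := norm_pos_iff.mpr this
      positivity
  set d : ℝ := ‖s - u‖ ^ 2 with hdd
  set θ : ℝ := min 1 (-c / d) with hθ
  have hθ0 : 0 < θ := lt_min one_pos (div_pos (neg_pos.mpr h) hd)
  have hθ1 : θ ≤ 1 := min_le_left _ _
  have hθd : θ * d ≤ -c := by
    have : θ ≤ -c / d := min_le_right _ _
    calc θ * d ≤ (-c / d) * d := by nlinarith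
    _ = -c := by field_simp
  have hw : (1 - θ) • u + θ • s ∈ K := hK hu hs (by linarith) hθ0.le (by ring)
  have hle := hmin _ hw
  have hsq : ‖(1 - θ) • u + θ • s - v‖ ^ 2 = ‖u - v‖ ^ 2 + 2 * θ * c + θ ^ 2 * d := by
    have hrw : (1 - θ) • u + θ • s - v = (u - v) + θ • (s - u) := by
      module
    rw [hrw, norm_add_sq_real, real_inner_smul_right, norm_smul]
    simp [hc, hdd, mul_pow]
    ring
  have hle2 : ‖u - v‖ ^ 2 ≤ ‖(1 - θ) • u + θ • s - v‖ ^ 2 := by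
    have := norm_nonneg (u - v)
    nlinarith
  nlinarith

/-- The acute-angle claim in the proof of the facial distance theorem: if `u, v` attain
the minimum distance between a proper nonempty face `F` of `conv(A)` and `conv(A \ F)`,
and `u - v` is orthogonal to `F - v` and to `G - u` for the face
`G = {s ∈ conv(A\F) : ⟨u-v, s-u⟩ = 0}`, then `⟨u-v, a-v⟩ ≥ 0` for all `a ∈ A`. -/
theorem acute_angle {m : ℕ} (A : Set (EuclideanSpace ℝ (Fin m))) (hA : A.Finite)
    (F : Set (EuclideanSpace ℝ (Fin m)))
    (hF : IsExposed ℝ (convexHull ℝ A) F) (hFne : F.Nonempty)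
    (hFproper : F ≠ convexHull ℝ A)
    (u v : EuclideanSpace ℝ (Fin m))
    (hu : u ∈ convexHull ℝ (A \ F)) (hv : v ∈ F)
    (hmin : ∀ u' ∈ convexHull ℝ (A \ F), ∀ v' ∈ F, ‖u - v‖ ≤ ‖u' - v'‖)
    (horthF : ∀ t ∈ F, ⟪u - v, t - v⟫ = 0)
    (horthG : ∀ s ∈ {s ∈ convexHull ℝ (A \ F) | ⟪u - v, s - u⟫ = 0}, ⟪u - v, s - u⟫ = 0) :
    ∀ a ∈ A, 0 ≤ ⟪u - v, a - v⟫ := by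
  intro a ha
  by_cases haF : a ∈ F
  · exact le_of_eq (horthF a haF).symm
  · have haK : a ∈ convexHull ℝ (A \ F) := subset_convexHull ℝ _ ⟨ha, haF⟩
    have h1 : 0 ≤ ⟪u - v, a - u⟫ :=
      aux_min_inner (convex_convexHull ℝ _) hu (fun s hs => hmin s hs v hv) a haK
    have h2 : ⟪u - v, a - v⟫ = ⟪u - v, a - u⟫ + ⟪u - v, u - v⟫ := by
      rw [← inner_add_right]
      congr 1
      module
    rw [h2]
    have := real_inner_self_nonneg (x := u - v)
    linarith
end

section
/- For A = {0,1}^m ⊆ R^m (the vertices of the unit cube), the facial distance satisfies Φ(A) = dist(0, conv{e_1,...,e_m}) = 1/√m. -/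
open scoped RealInnerProductSpace

/-- Euclidean distance between two sets. -/
noncomputable def setDist {m : ℕ} (C D : Set (EuclideanSpace ℝ (Fin m))) : ℝ :=
  sInf {r | ∃ c ∈ C, ∃ d ∈ D, r = dist c d}

/-- The facial distance of a finite set of atoms `A`:
`Φ(A) = min over proper nonempty faces F of conv(A) of dist(F, conv(A \ F))`. -/
noncomputable def facialDist {m : ℕ} (A : Set (EuclideanSpace ℝ (Fin m))) : ℝ :=
  sInf {r | ∃ F : Set (EuclideanSpace ℝ (Fin m)),
    IsExposed ℝ (convexHull ℝ A) F ∧ F.Nonempty ∧ F ≠ convexHull ℝ A ∧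
    r = setDist F (convexHull ℝ (A \ F))}

namespace FDC

variable {m : ℕ}

lemma inner_eq (x y : EuclideanSpace ℝ (Fin m)) : ⟪x, y⟫ = ∑ i, x i * y i := by
  simp [PiLp.inner_apply, RCLike.inner_apply, conj_trivial]
  exact Finset.sum_congr rfl fun _ _ => mul_comm _ _

lemma decomp (l : EuclideanSpace ℝ (Fin m) →L[ℝ] ℝ) (y : EuclideanSpace ℝ (Fin m)) :
    l y = ∑ i, y i * l (EuclideanSpace.single i 1) := by
  conv_lhs => rw [← (by
    have := (EuclideanSpace.basisFun (Fin m) ℝ).sum_repr y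
    simpa [EuclideanSpace.basisFun_apply, EuclideanSpace.basisFun_repr] using this :
      ∑ i, y i • EuclideanSpace.single i (1:ℝ) = y)]
  rw [map_sum]
  simp [smul_eq_mul]

lemma convex_box : Convex ℝ {x : EuclideanSpace ℝ (Fin m) | ∀ i, 0 ≤ x i ∧ x i ≤ 1} := by
  intro x hx y hy a b ha hb hab
  intro i
  have hxi := hx i; have hyi := hy i
  have happ : (a • x + b • y) i = a * x i + b * y i := rfl
  rw [happ]
  constructor
  · exact add_nonneg (mul_nonneg ha hxi.1) (mul_nonneg hb hyi.1)
  · nlinarith [hxi.1, hxi.2, hyi.1, hyi.2]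

lemma hull_sub_box : convexHull ℝ {v : EuclideanSpace ℝ (Fin m) | ∀ i, v i = 0 ∨ v i = 1}
    ⊆ {x | ∀ i, 0 ≤ x i ∧ x i ≤ 1} := by
  apply convexHull_min _ convex_box
  intro v hv i
  rcases hv i with h | h <;> simp [h]

lemma hull_inner_le {s : Set (EuclideanSpace ℝ (Fin m))} {w : EuclideanSpace ℝ (Fin m)} {a : ℝ}
    (h : ∀ v ∈ s, ⟪w, v⟫ ≤ a) {y} (hy : y ∈ convexHull ℝ s) : ⟪w, y⟫ ≤ a := by
  have hconv : Convex ℝ {z : EuclideanSpace ℝ (Fin m) | ⟪w, z⟫ ≤ a} :=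
    convex_halfSpace_le ⟨fun p q => inner_add_right w p q, fun c p => real_inner_smul_right w p c⟩ a
  exact convexHull_min h hconv hy

lemma hull_inner_ge {s : Set (EuclideanSpace ℝ (Fin m))} {w : EuclideanSpace ℝ (Fin m)} {a : ℝ}
    (h : ∀ v ∈ s, a ≤ ⟪w, v⟫) {y} (hy : y ∈ convexHull ℝ s) : a ≤ ⟪w, y⟫ := by
  have hconv : Convex ℝ {z : EuclideanSpace ℝ (Fin m) | a ≤ ⟪w, z⟫} :=
    convex_halfSpace_ge ⟨fun p q => inner_add_right w p q, fun c p => real_inner_smul_right w p c⟩ a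
  exact convexHull_min h hconv hy

lemma cs_bound (hm : 0 < m) (w x y : EuclideanSpace ℝ (Fin m)) (hw : ∀ i, |w i| ≤ 1)
    (h : 1 ≤ ⟪w, x⟫ - ⟪w, y⟫) : 1 / Real.sqrt m ≤ dist x y := by
  have hsm : (0:ℝ) < Real.sqrt m := Real.sqrt_pos.2 (by exact_mod_cast hm)
  have h1 : ⟪w, x⟫ - ⟪w, y⟫ = ⟪w, x - y⟫ := (inner_sub_right w x y).symm
  have h2 : ⟪w, x - y⟫ ≤ ‖w‖ * ‖x - y‖ := real_inner_le_norm w (x - y)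
  have hwn : ‖w‖ ≤ Real.sqrt m := by
    rw [EuclideanSpace.norm_eq]
    calc Real.sqrt (∑ i, ‖w i‖ ^ 2) ≤ Real.sqrt (∑ _i : Fin m, (1:ℝ)) := by
          apply Real.sqrt_le_sqrt
          apply Finset.sum_le_sum
          intro i _
          have := hw i
          have : ‖w i‖ ≤ 1 := by rwa [Real.norm_eq_abs]
          nlinarith [norm_nonneg (w i)]
      _ = Real.sqrt m := by simp
  have h3 : 1 ≤ Real.sqrt m * ‖x - y‖ := by
    have : ‖w‖ * ‖x - y‖ ≤ Real.sqrt m * ‖x - y‖ := by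
      apply mul_le_mul_of_nonneg_right hwn (norm_nonneg _)
    linarith [h, h1 ▸ h, h2]
  rw [dist_eq_norm]
  rw [div_le_iff₀ hsm] at *
  linarith [h3]

lemma face_lb (hm : 0 < m)
    {F : Set (EuclideanSpace ℝ (Fin m))}
    (hF : IsExposed ℝ (convexHull ℝ {v : EuclideanSpace ℝ (Fin m) | ∀ i, v i = 0 ∨ v i = 1}) F)
    (hne : F.Nonempty)
    {x y : EuclideanSpace ℝ (Fin m)} (hx : x ∈ F)
    (hy : y ∈ convexHull ℝ ({v : EuclideanSpace ℝ (Fin m) | ∀ i, v i = 0 ∨ v i = 1} \ F)) :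
    1 / Real.sqrt m ≤ dist x y := by
  set A : Set (EuclideanSpace ℝ (Fin m)) := {v | ∀ i, v i = 0 ∨ v i = 1} with hA
  obtain ⟨l, hl⟩ := hF hne
  set c : Fin m → ℝ := fun i => l (EuclideanSpace.single i 1) with hc
  set M : ℝ := ∑ i, max (c i) 0 with hM
  have hterm : ∀ z : EuclideanSpace ℝ (Fin m), (∀ i, 0 ≤ z i ∧ z i ≤ 1) →
      ∀ i, c i * z i ≤ max (c i) 0 := by
    intro z hz i
    rcases le_or_gt (c i) 0 with h | h
    · exact (mul_nonpos_of_nonpos_of_nonneg h (hz i).1).trans (le_max_right _ _)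
    · have h2 : c i * z i ≤ c i * 1 := by nlinarith [(hz i).2]
      rw [max_eq_left h.le]; linarith
  have hdec : ∀ z : EuclideanSpace ℝ (Fin m), l z = ∑ i, c i * z i := by
    intro z; rw [decomp l z]; exact Finset.sum_congr rfl (by intros; rw [hc]; ring)
  have hlM : ∀ z ∈ convexHull ℝ A, l z ≤ M := by
    intro z hz
    rw [hdec z, hM]
    exact Finset.sum_le_sum fun i _ => hterm z (hull_sub_box hz) i
  set vstar : EuclideanSpace ℝ (Fin m) :=
    WithLp.toLp 2 (fun i => if 0 < c i then (1:ℝ) else 0 : Fin m → ℝ) with hvs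
  have hvA : vstar ∈ A := by
    intro i; by_cases h : 0 < c i <;> simp [hvs, h]
  have hvM : l vstar = M := by
    rw [hdec, hM]
    apply Finset.sum_congr rfl; intro i _
    by_cases h : 0 < c i
    · simp [hvs, h, max_eq_left h.le]
    · simp [hvs, h, max_eq_right (not_lt.1 h)]
  have hmemF : ∀ z, z ∈ F ↔ (z ∈ convexHull ℝ A ∧ l z = M) := by
    intro z
    rw [hl]; simp only [Set.mem_setOf_eq]
    constructor
    · rintro ⟨hzC, hzmax⟩
      refine ⟨hzC, le_antisymm (hlM z hzC) ?_⟩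
      have h2 := hzmax vstar (subset_convexHull ℝ A hvA)
      rwa [hvM] at h2
    · rintro ⟨hzC, hzeq⟩
      exact ⟨hzC, fun u hu => by rw [hzeq]; exact hlM u hu⟩
  have hxC := ((hmemF x).1 hx).1
  have hxM := ((hmemF x).1 hx).2
  have hxbox := hull_sub_box hxC
  have key : ∀ i₀, c i₀ * x i₀ < max (c i₀) 0 → False := by
    intro i₀ hstrict
    have hlt : ∑ i, c i * x i < M :=
      hM ▸ Finset.sum_lt_sum (fun i _ => hterm x hxbox i) ⟨i₀, Finset.mem_univ _, hstrict⟩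
    rw [← hdec x, hxM] at hlt
    exact lt_irrefl _ hlt
  have hx1 : ∀ i, 0 < c i → x i = 1 := by
    intro i hci
    by_contra hne1
    refine key i ?_
    rw [max_eq_left hci.le]
    have : x i < 1 := lt_of_le_of_ne (hxbox i).2 hne1
    nlinarith
  have hx0 : ∀ i, c i < 0 → x i = 0 := by
    intro i hci
    by_contra hne0
    refine key i ?_
    rw [max_eq_right hci.le]
    have : 0 < x i := lt_of_le_of_ne (hxbox i).1 (Ne.symm hne0)
    nlinarith
  have hwit : ∀ v ∈ A \ F, ∃ i, (0 < c i ∧ v i = 0) ∨ (c i < 0 ∧ v i = 1) := by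
    rintro v ⟨hvA', hvF⟩
    have hvC := subset_convexHull ℝ A hvA'
    have hvlt : l v < M := lt_of_le_of_ne (hlM v hvC) (fun h => hvF ((hmemF v).2 ⟨hvC, h⟩))
    by_contra hno
    push_neg at hno
    have heq : l v = M := by
      rw [hdec, hM]
      apply Finset.sum_congr rfl; intro i _
      rcases lt_trichotomy (c i) 0 with h | h | h
      · have hv0 : v i = 0 := by
          rcases hvA' i with h0 | h1
          · exact h0
          · exact absurd h1 ((hno i).2 h)
        simp [hv0, max_eq_right h.le]
      · simp [h]
      · have hv1 : v i = 1 := by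
          rcases hvA' i with h0 | h1
          · exact absurd h0 ((hno i).1 h)
          · exact h1
        simp [hv1, max_eq_left h.le]
    exact absurd heq (ne_of_lt hvlt)
  set w : EuclideanSpace ℝ (Fin m) :=
    WithLp.toLp 2 (fun i => if 0 < c i then (1:ℝ) else if c i < 0 then -1 else 0 : Fin m → ℝ) with hw
  set k : ℝ := ∑ i, (if 0 < c i then (1:ℝ) else 0) with hk
  have habs : ∀ i, |w i| ≤ 1 := by
    intro i
    rcases lt_trichotomy (c i) 0 with h | h | h <;>
      simp [hw, h, not_lt.2 h.le, abs_le] <;> norm_num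
  have hwx : ⟪w, x⟫ = k := by
    rw [inner_eq, hk]
    apply Finset.sum_congr rfl; intro i _
    rcases lt_trichotomy (c i) 0 with h | h | h
    · simp [hw, not_lt.2 h.le, h, hx0 i h]
    · simp [hw, h]
    · simp [hw, h, hx1 i h]
  have hwv : ∀ v ∈ A \ F, ⟪w, v⟫ ≤ k - 1 := by
    intro v hv
    obtain ⟨i₀, hi₀⟩ := hwit v hv
    rw [inner_eq]
    have hterm2 : ∀ i, w i * v i ≤ (if 0 < c i then (1:ℝ) else 0) - (if i = i₀ then 1 else 0) := by
      intro i
      by_cases hii : i = i₀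
      · subst hii
        rcases hi₀ with ⟨hcp, hv0⟩ | ⟨hcn, hv1⟩
        · simp [hw, hcp, hv0]
        · simp [hw, not_lt.2 hcn.le, hcn, hv1]
      · simp only [hii, if_false, sub_zero]
        rcases lt_trichotomy (c i) 0 with h | h | h
        · rcases hv.1 i with h01 | h01 <;> simp [hw, not_lt.2 h.le, h, h01] <;> norm_num
        · simp [hw, h]
        · rcases hv.1 i with h01 | h01 <;> simp [hw, h, h01]
    calc ∑ i, w i * v i
        ≤ ∑ i, ((if 0 < c i then (1:ℝ) else 0) - (if i = i₀ then 1 else 0)) :=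
          Finset.sum_le_sum fun i _ => hterm2 i
      _ = k - 1 := by rw [Finset.sum_sub_distrib, hk]; simp
  have hyk : ⟪w, y⟫ ≤ k - 1 := hull_inner_le hwv hy
  exact cs_bound hm w x y habs (by rw [hwx]; linarith)

lemma apply_sum {ι : Type*} [DecidableEq ι] (s : Finset ι) (f : ι → EuclideanSpace ℝ (Fin m)) (j : Fin m) :
    (∑ i ∈ s, f i) j = ∑ i ∈ s, f i j := by
  induction s using Finset.induction with
  | empty => rfl
  | insert a s' h ih => rw [Finset.sum_insert h, Finset.sum_insert h, ← ih]; rfl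

lemma zero_mem_A : (0 : EuclideanSpace ℝ (Fin m)) ∈
    {v : EuclideanSpace ℝ (Fin m) | ∀ i, v i = 0 ∨ v i = 1} := fun _ => Or.inl rfl

lemma single_mem_A (i : Fin m) : EuclideanSpace.single i (1:ℝ) ∈
    {v : EuclideanSpace ℝ (Fin m) | ∀ i, v i = 0 ∨ v i = 1} := by
  intro j
  rcases eq_or_ne j i with h | h
  · right; simp [EuclideanSpace.single_apply, h]
  · left; simp [EuclideanSpace.single_apply, h]

lemma single_ne_zero' (i : Fin m) : EuclideanSpace.single i (1:ℝ) ≠ 0 := by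
  intro h
  have := congrArg (fun z : EuclideanSpace ℝ (Fin m) => z i) h
  simp [EuclideanSpace.single_apply] at this

def onesE (m : ℕ) : EuclideanSpace ℝ (Fin m) := WithLp.toLp 2 (fun _ => 1 : Fin m → ℝ)

def negOnesE (m : ℕ) : EuclideanSpace ℝ (Fin m) := WithLp.toLp 2 (fun _ => -1 : Fin m → ℝ)

lemma ones_abs : ∀ i, |onesE m i| ≤ 1 := by
  intro i; simp [onesE]

/-- the centroid point -/
noncomputable def pt (m : ℕ) : EuclideanSpace ℝ (Fin m) :=
  ((m:ℝ))⁻¹ • ∑ i, EuclideanSpace.single i (1:ℝ)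

lemma pt_apply (j : Fin m) : pt m j = (m:ℝ)⁻¹ := by
  have h1 : pt m j = (m:ℝ)⁻¹ * (∑ i, EuclideanSpace.single i (1:ℝ)) j := rfl
  rw [h1, apply_sum]
  simp [EuclideanSpace.single_apply]

lemma dist_zero_pt (hm : 0 < m) : dist (0 : EuclideanSpace ℝ (Fin m)) (pt m) = 1 / Real.sqrt m := by
  rw [dist_zero_left, EuclideanSpace.norm_eq]
  have h1 : ∀ j : Fin m, ‖pt m j‖ ^ 2 = ((m:ℝ)⁻¹) ^ 2 := by
    intro j; rw [pt_apply]; simp [sq_abs]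
  rw [Finset.sum_congr rfl fun j _ => h1 j, Finset.sum_const, Finset.card_univ, Fintype.card_fin]
  have hmpos : (0:ℝ) < m := by exact_mod_cast hm
  rw [nsmul_eq_mul]
  have : (m:ℝ) * ((m:ℝ)⁻¹) ^ 2 = ((m:ℝ))⁻¹ := by field_simp
  rw [this, Real.sqrt_inv, one_div]

lemma pt_mem_simplex (hm : 0 < m) :
    pt m ∈ convexHull ℝ (Set.range fun i : Fin m => EuclideanSpace.single i (1:ℝ)) := by
  have h := Finset.centerMass_mem_convexHull (Finset.univ : Finset (Fin m))
    (w := fun _ => (1:ℝ)) (by intro i _; norm_num)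
    (by simp; exact_mod_cast hm)
    (z := fun i => EuclideanSpace.single i (1:ℝ))
    (fun i _ => Set.mem_range_self i)
  have h2 : (Finset.univ : Finset (Fin m)).centerMass (fun _ => (1:ℝ))
      (fun i => EuclideanSpace.single i (1:ℝ)) = pt m := by
    rw [Finset.centerMass]
    simp [pt]
  rwa [h2] at h

lemma inner_ones_eq_sum (v : EuclideanSpace ℝ (Fin m)) :
    ⟪onesE m, v⟫ = ∑ i, v i := by
  rw [inner_eq]; simp [onesE]

lemma setDist_zero_eq {D : Set (EuclideanSpace ℝ (Fin m))} {r0 : ℝ}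
    (hlow : ∀ d ∈ D, r0 ≤ dist (0 : EuclideanSpace ℝ (Fin m)) d)
    {q : EuclideanSpace ℝ (Fin m)} (hq : q ∈ D) (hd : dist (0 : EuclideanSpace ℝ (Fin m)) q = r0) :
    setDist {0} D = r0 := by
  unfold setDist
  have hmem : r0 ∈ {r | ∃ c ∈ ({0} : Set (EuclideanSpace ℝ (Fin m))), ∃ d ∈ D, r = dist c d} :=
    ⟨0, Set.mem_singleton _, q, hq, hd.symm⟩
  have hbdd : ∀ r ∈ {r | ∃ c ∈ ({0} : Set (EuclideanSpace ℝ (Fin m))), ∃ d ∈ D, r = dist c d},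
      r0 ≤ r := by
    rintro r ⟨c, hc, d, hd', rfl⟩
    rw [Set.mem_singleton_iff] at hc; subst hc
    exact hlow d hd'
  exact le_antisymm (csInf_le ⟨r0, hbdd⟩ hmem) (le_csInf ⟨r0, hmem⟩ hbdd)

lemma simplex_setDist (hm : 0 < m) :
    setDist {(0 : EuclideanSpace ℝ (Fin m))}
      (convexHull ℝ (Set.range fun i : Fin m => EuclideanSpace.single i (1 : ℝ))) =
      1 / Real.sqrt m := by
  apply setDist_zero_eq _ (pt_mem_simplex hm) (dist_zero_pt hm)
  intro d hd
  have hge : 1 ≤ ⟪onesE m, d⟫ := by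
    apply hull_inner_ge _ hd
    rintro v ⟨i, rfl⟩
    rw [inner_ones_eq_sum]
    simp [EuclideanSpace.single_apply]
  rw [dist_comm]
  apply cs_bound hm _ _ _ ones_abs
  rw [inner_zero_right]
  linarith

lemma exposed_zero (hm : 0 < m) :
    IsExposed ℝ (convexHull ℝ {v : EuclideanSpace ℝ (Fin m) | ∀ i, v i = 0 ∨ v i = 1})
      ({0} : Set (EuclideanSpace ℝ (Fin m))) := by
  intro _
  refine ⟨innerSL ℝ (negOnesE m), ?_⟩
  ext z
  simp only [Set.mem_singleton_iff, Set.mem_setOf_eq]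
  constructor
  · rintro rfl
    refine ⟨subset_convexHull ℝ _ zero_mem_A, ?_⟩
    intro u hu
    have hub := hull_sub_box hu
    show ⟪_, u⟫ ≤ ⟪_, (0 : EuclideanSpace ℝ (Fin m))⟫
    rw [inner_zero_right, inner_eq]
    apply Finset.sum_nonpos
    intro i _
    have h1 := (hub i).1
    have h2 : negOnesE m i = -1 := rfl
    nlinarith
  · rintro ⟨hzC, hzmax⟩
    have h0 := hzmax 0 (subset_convexHull ℝ _ zero_mem_A)
    have h0' : ⟪negOnesE m, (0:EuclideanSpace ℝ (Fin m))⟫ ≤ ⟪negOnesE m, z⟫ := h0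
    rw [inner_zero_right, inner_eq] at h0'
    have hbox := hull_sub_box hzC
    have hsum : ∑ i, z i ≤ 0 := by
      have : ∑ i, negOnesE m i * z i = -∑ i, z i := by
        rw [← Finset.sum_neg_distrib]; apply Finset.sum_congr rfl; intro i _; simp [negOnesE]
      linarith [this ▸ h0']
    have hall := (Finset.sum_eq_zero_iff_of_nonneg (fun i _ => (hbox i).1)).1
      (le_antisymm hsum (Finset.sum_nonneg fun i _ => (hbox i).1))
    ext i
    exact hall i (Finset.mem_univ i)

lemma zero_ne_hull (hm : 0 < m) :
    ({0} : Set (EuclideanSpace ℝ (Fin m))) ≠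
      convexHull ℝ {v : EuclideanSpace ℝ (Fin m) | ∀ i, v i = 0 ∨ v i = 1} := by
  intro h
  have h1 : EuclideanSpace.single (⟨0, hm⟩ : Fin m) (1:ℝ) ∈
      convexHull ℝ {v : EuclideanSpace ℝ (Fin m) | ∀ i, v i = 0 ∨ v i = 1} :=
    subset_convexHull ℝ _ (single_mem_A _)
  rw [← h, Set.mem_singleton_iff] at h1
  exact single_ne_zero' _ h1

lemma cube_face_setDist (hm : 0 < m) :
    setDist ({0} : Set (EuclideanSpace ℝ (Fin m)))
      (convexHull ℝ ({v : EuclideanSpace ℝ (Fin m) | ∀ i, v i = 0 ∨ v i = 1} \ {0})) =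
      1 / Real.sqrt m := by
  apply setDist_zero_eq
  · intro d hd
    exact face_lb hm (exposed_zero hm) ⟨0, rfl⟩ (Set.mem_singleton _) hd
  · show pt m ∈ _
    apply convexHull_mono _ (pt_mem_simplex hm)
    rintro v ⟨i, rfl⟩
    exact ⟨single_mem_A i, by simpa using single_ne_zero' i⟩
  · exact dist_zero_pt hm

lemma facialDist_eq (hm : 0 < m) :
    facialDist {v : EuclideanSpace ℝ (Fin m) | ∀ i, v i = 0 ∨ v i = 1} = 1 / Real.sqrt m := by
  set A : Set (EuclideanSpace ℝ (Fin m)) := {v | ∀ i, v i = 0 ∨ v i = 1} with hA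
  unfold facialDist
  have hmem : 1 / Real.sqrt m ∈ {r | ∃ F : Set (EuclideanSpace ℝ (Fin m)),
      IsExposed ℝ (convexHull ℝ A) F ∧ F.Nonempty ∧ F ≠ convexHull ℝ A ∧
      r = setDist F (convexHull ℝ (A \ F))} :=
    ⟨{0}, exposed_zero hm, ⟨0, rfl⟩, zero_ne_hull hm, (cube_face_setDist hm).symm⟩
  have hlb : ∀ r ∈ {r | ∃ F : Set (EuclideanSpace ℝ (Fin m)),
      IsExposed ℝ (convexHull ℝ A) F ∧ F.Nonempty ∧ F ≠ convexHull ℝ A ∧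
      r = setDist F (convexHull ℝ (A \ F))}, 1 / Real.sqrt m ≤ r := by
    rintro r ⟨F, hF, hne, hFne, rfl⟩
    have hAF : (A \ F).Nonempty := by
      by_contra h
      rw [Set.not_nonempty_iff_eq_empty, Set.diff_eq_empty] at h
      have hsub : convexHull ℝ A ⊆ F := convexHull_min h (hF.convex (convex_convexHull ℝ A))
      exact hFne (Set.Subset.antisymm hF.subset hsub)
    obtain ⟨x0, hx0⟩ := hne
    obtain ⟨d0, hd0⟩ := hAF.mono (subset_convexHull ℝ (A \ F))
    unfold setDist
    apply le_csInf
    · exact ⟨dist x0 d0, x0, hx0, d0, hd0, rfl⟩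
    · rintro r ⟨cc, hcc, dd, hdd, rfl⟩
      exact face_lb hm hF ⟨x0, hx0⟩ hcc hdd
  exact le_antisymm (csInf_le ⟨1 / Real.sqrt m, hlb⟩ hmem) (le_csInf ⟨_, hmem⟩ hlb)

end FDC

/-- For the vertex set of the unit cube `A = {0,1}^m`, the facial distance equals
`dist(0, conv{e_1, …, e_m}) = 1/√m`. -/
theorem facialDist_cube {m : ℕ} (hm : 0 < m) :
    facialDist {v : EuclideanSpace ℝ (Fin m) | ∀ i, v i = 0 ∨ v i = 1} =
        setDist {0} (convexHull ℝ (Set.range fun i : Fin m => EuclideanSpace.single i (1 : ℝ))) ∧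
      setDist {(0 : EuclideanSpace ℝ (Fin m))}
        (convexHull ℝ (Set.range fun i : Fin m => EuclideanSpace.single i (1 : ℝ))) =
        1 / Real.sqrt m := by
  refine ⟨?_, FDC.simplex_setDist hm⟩
  rw [FDC.facialDist_eq hm, FDC.simplex_setDist hm]
end

section
/- For A = {e_1,...,e_m} ⊆ R^m with m ≥ 2, the minimum over nonempty proper subsets S ⊂ A of the distance between the centroid of S and the centroid of A\S equals min over r ∈ {1,...,m−1} of √(m/(r(m−r))), which equals 2/√m if m is even and 2/√(m − 1/m) if m is odd. -/
open scoped BigOperators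

/-- Centroid of a finite set of indices, for the standard basis of `ℝ^m`. -/
noncomputable def basisCentroid {m : ℕ} (S : Finset (Fin m)) : EuclideanSpace ℝ (Fin m) :=
  (S.card : ℝ)⁻¹ • ∑ i ∈ S, EuclideanSpace.single i (1 : ℝ)

lemma sum_single_apply {m : ℕ} (S : Finset (Fin m)) (j : Fin m) :
    (∑ i ∈ S, EuclideanSpace.single i (1:ℝ)) j = ∑ i ∈ S, (EuclideanSpace.single i (1:ℝ)) j :=
  by rw [WithLp.ofLp_sum, Finset.sum_apply]

lemma basisCentroid_apply {m : ℕ} (S : Finset (Fin m)) (j : Fin m) :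
    basisCentroid S j = if j ∈ S then (S.card : ℝ)⁻¹ else 0 := by
  have : basisCentroid S j = (S.card : ℝ)⁻¹ * (∑ i ∈ S, EuclideanSpace.single i (1:ℝ)) j := rfl
  rw [this, sum_single_apply]
  simp [EuclideanSpace.single_apply, mul_ite]

lemma norm_centroid_diff {m : ℕ} (S : Finset (Fin m)) (h1 : S.Nonempty) (h2 : S ≠ Finset.univ) :
    ‖basisCentroid S - basisCentroid Sᶜ‖
      = Real.sqrt ((m : ℝ) / (S.card * ((m : ℝ) - S.card))) := by
  have hrm : S.card ≤ m := by simpa using S.card_le_univ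
  have hr : 0 < S.card := h1.card_pos
  have hlt : S.card < m := lt_of_le_of_ne hrm
    (fun h => h2 ((Finset.card_eq_iff_eq_univ S).mp (by simp [h])))
  have hcc : Sᶜ.card = m - S.card := by simp [Finset.card_compl]
  have hccR : (Sᶜ.card : ℝ) = (m : ℝ) - S.card := by
    rw [hcc]; push_cast [hrm]; ring
  have hx : ∀ i, (basisCentroid S - basisCentroid Sᶜ) i
      = if i ∈ S then (S.card : ℝ)⁻¹ else -((Sᶜ.card : ℝ)⁻¹) := by
    intro i
    have : (basisCentroid S - basisCentroid Sᶜ) i = basisCentroid S i - basisCentroid Sᶜ i := rfl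
    rw [this, basisCentroid_apply, basisCentroid_apply]
    by_cases h : i ∈ S <;> simp [h, Finset.mem_compl]
  rw [EuclideanSpace.norm_eq]
  congr 1
  rw [← Finset.sum_add_sum_compl S]
  have e1 : ∀ i ∈ S, ‖(basisCentroid S - basisCentroid Sᶜ) i‖ ^ 2 = ((S.card : ℝ)⁻¹) ^ 2 :=
    fun i hi => by rw [hx i, if_pos hi, Real.norm_eq_abs, sq_abs]
  have e2 : ∀ i ∈ Sᶜ, ‖(basisCentroid S - basisCentroid Sᶜ) i‖ ^ 2 = ((Sᶜ.card : ℝ)⁻¹) ^ 2 :=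
    fun i hi => by
      rw [hx i, if_neg (Finset.mem_compl.mp hi), Real.norm_eq_abs, abs_neg, sq_abs]
  rw [Finset.sum_congr rfl e1, Finset.sum_congr rfl e2, Finset.sum_const, Finset.sum_const,
    nsmul_eq_mul, nsmul_eq_mul, hccR]
  have hrR : (0:ℝ) < S.card := by exact_mod_cast hr
  have hcR : (0:ℝ) < (m : ℝ) - S.card := by
    have : (S.card : ℝ) < m := by exact_mod_cast hlt
    linarith
  field_simp
  ring

lemma prod_le_half (m r : ℕ) (hr : r ≤ m) : r * (m - r) ≤ m / 2 * (m - m / 2) := by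
  have h2 : 2 * (m / 2) = m ∨ 2 * (m / 2) + 1 = m := by omega
  have hkm : m / 2 ≤ m := by omega
  zify [hr, hkm]
  set k := ((m / 2 : ℕ) : ℤ) with hk
  have key : 0 ≤ (k - r) * (k - r + 1) := by
    rcases le_or_gt (r:ℤ) k with h' | h'
    · exact mul_nonneg (by linarith) (by linarith)
    · have := mul_nonneg (by linarith : (0:ℤ) ≤ -(k - r)) (by linarith : (0:ℤ) ≤ -(k - r + 1))
      nlinarith
  rcases h2 with h | h
  · have h' : (m : ℤ) = 2 * k := by rw [hk]; exact_mod_cast h.symm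
    nlinarith [sq_nonneg (k - r)]
  · have h' : (m : ℤ) = 2 * k + 1 := by rw [hk]; exact_mod_cast h.symm
    nlinarith

lemma cast_prod (m r : ℕ) (hr : r ≤ m) :
    (r : ℝ) * ((m : ℝ) - r) = ((r * (m - r) : ℕ) : ℝ) := by
  push_cast [Nat.cast_sub hr]; ring

/-- For `A = {e_1, …, e_m}` with `m ≥ 2`, the minimum over nonempty proper subsets `S` of
the distance between the centroid of `S` and the centroid of `A \ S` equals
`min_{r ∈ {1,…,m-1}} √(m/(r(m-r)))`, which is `2/√m` for even `m` and `2/√(m - 1/m)`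
for odd `m`. -/
theorem simplex_centroid_distance {m : ℕ} (hm : 2 ≤ m) :
    (sInf {t : ℝ | ∃ S : Finset (Fin m), S.Nonempty ∧ S ≠ Finset.univ ∧
        t = ‖basisCentroid S - basisCentroid Sᶜ‖} =
      sInf {t : ℝ | ∃ r : ℕ, 1 ≤ r ∧ r ≤ m - 1 ∧
        t = Real.sqrt ((m : ℝ) / (r * ((m : ℝ) - r)))}) ∧
    sInf {t : ℝ | ∃ r : ℕ, 1 ≤ r ∧ r ≤ m - 1 ∧
        t = Real.sqrt ((m : ℝ) / (r * ((m : ℝ) - r)))} =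
      (if Even m then 2 / Real.sqrt m else 2 / Real.sqrt ((m : ℝ) - 1 / m)) := by
  have hsetEq : {t : ℝ | ∃ S : Finset (Fin m), S.Nonempty ∧ S ≠ Finset.univ ∧
        t = ‖basisCentroid S - basisCentroid Sᶜ‖} =
      {t : ℝ | ∃ r : ℕ, 1 ≤ r ∧ r ≤ m - 1 ∧
        t = Real.sqrt ((m : ℝ) / (r * ((m : ℝ) - r)))} := by
    ext t
    constructor
    · rintro ⟨S, h1, h2, rfl⟩
      refine ⟨S.card, h1.card_pos, ?_, ?_⟩
      · have hle : S.card ≤ m := by simpa using S.card_le_univ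
        have : S.card ≠ m := fun h => h2 ((Finset.card_eq_iff_eq_univ S).mp (by simp [h]))
        omega
      · exact norm_centroid_diff S h1 h2
    · rintro ⟨r, hr1, hr2, rfl⟩
      obtain ⟨S, -, hScard⟩ :=
        Finset.exists_subset_card_eq (s := (Finset.univ : Finset (Fin m))) (n := r) (by simp; omega)
      have hne : S.Nonempty := by rw [← Finset.card_pos, hScard]; omega
      have hnu : S ≠ Finset.univ := by
        intro h; rw [h, Finset.card_univ] at hScard; simp at hScard; omega
      exact ⟨S, hne, hnu, by rw [norm_centroid_diff S hne hnu, hScard]⟩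
  refine ⟨by rw [hsetEq], ?_⟩
  set k := m / 2 with hk
  have hk1 : 1 ≤ k := by omega
  have hk2 : k ≤ m - 1 := by omega
  have hkm : k ≤ m := by omega
  set v : ℝ := Real.sqrt ((m : ℝ) / (k * ((m : ℝ) - k))) with hv
  have hmem : v ∈ {t : ℝ | ∃ r : ℕ, 1 ≤ r ∧ r ≤ m - 1 ∧
      t = Real.sqrt ((m : ℝ) / (r * ((m : ℝ) - r)))} := ⟨k, hk1, hk2, rfl⟩
  have hlb : ∀ t ∈ {t : ℝ | ∃ r : ℕ, 1 ≤ r ∧ r ≤ m - 1 ∧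
      t = Real.sqrt ((m : ℝ) / (r * ((m : ℝ) - r)))}, v ≤ t := by
    rintro t ⟨r, hr1, hr2, rfl⟩
    apply Real.sqrt_le_sqrt
    have hrm : r ≤ m := by omega
    rw [cast_prod m r hrm, cast_prod m k hkm]
    have hpos : (0:ℝ) < ((r * (m - r) : ℕ) : ℝ) := by
      have : 0 < r * (m - r) := Nat.mul_pos (by omega) (by omega)
      exact_mod_cast this
    have hle : ((r * (m - r) : ℕ) : ℝ) ≤ ((k * (m - k) : ℕ) : ℝ) := by
      exact_mod_cast prod_le_half m r hrm
    gcongr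
  have hInf : sInf {t : ℝ | ∃ r : ℕ, 1 ≤ r ∧ r ≤ m - 1 ∧
      t = Real.sqrt ((m : ℝ) / (r * ((m : ℝ) - r)))} = v :=
    le_antisymm
      (csInf_le ⟨0, by rintro t ⟨r, -, -, rfl⟩; positivity⟩ hmem)
      (le_csInf ⟨v, hmem⟩ hlb)
  rw [hInf]
  have hs4 : Real.sqrt 4 = 2 := by
    rw [show (4:ℝ) = 2 ^ 2 by norm_num, Real.sqrt_sq (by norm_num)]
  have hm1 : (1:ℝ) < m := by exact_mod_cast (by omega : 1 < m)
  rcases Nat.even_or_odd m with he | ho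
  · rw [if_pos he]
    obtain ⟨c, hc⟩ := he
    have hck : k = c := by omega
    have hmr : (m : ℝ) = 2 * c := by rw [hc]; push_cast; ring
    have hd : (0:ℝ) < c * ((m:ℝ) - c) := by
      have hc1 : (1:ℝ) ≤ c := by exact_mod_cast (by omega : 1 ≤ c)
      nlinarith
    have harg : (m : ℝ) / (k * ((m : ℝ) - k)) = 4 / m := by
      rw [hck, div_eq_div_iff hd.ne' (by positivity)]
      rw [hmr]; ring
    rw [hv, harg, Real.sqrt_div (by norm_num) _, hs4]
  · rw [if_neg (Nat.not_even_iff_odd.mpr ho)]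
    obtain ⟨c, hc⟩ := ho
    have hck : k = c := by omega
    have hmr : (m : ℝ) = 2 * c + 1 := by rw [hc]; push_cast; ring
    have hc1 : (1:ℝ) ≤ c := by exact_mod_cast (by omega : 1 ≤ c)
    have hm0 : (0:ℝ) < m := by positivity
    have hd : (0:ℝ) < c * ((m:ℝ) - c) := by nlinarith
    have hd2 : (0:ℝ) < (m:ℝ) - 1 / m := by
      have : 1 / (m:ℝ) ≤ 1 := by
        rw [div_le_one hm0]; linarith
      linarith
    have harg : (m : ℝ) / (k * ((m : ℝ) - k)) = 4 / ((m:ℝ) - 1 / m) := by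
      rw [hck, div_eq_div_iff hd.ne' hd2.ne']
      field_simp
      rw [hmr]; ring
    rw [hv, harg, Real.sqrt_div (by norm_num) _, hs4]
end

section
/- For nonempty disjoint subsets S, T of the standard basis {e_1,...,e_m} of R^m, the distance between conv(S) and conv(T) is attained at the pair of centroids, i.e., dist(conv(S), conv(T)) = ‖(Σ_{s∈S} s)/|S| − (Σ_{t∈T} t)/|T|‖ = √(1/|S| + 1/|T|). -/
open scoped BigOperators

open scoped BigOperators
open Finset

lemma coordProps {m : ℕ} (S : Finset (Fin m)) {c : EuclideanSpace ℝ (Fin m)}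
    (hc : c ∈ convexHull ℝ ((fun i : Fin m => EuclideanSpace.single i (1 : ℝ)) '' S)) :
    (∀ i ∉ S, c i = 0) ∧ ∑ i ∈ S, c i = 1 := by
  have hsub : convexHull ℝ ((fun i : Fin m => EuclideanSpace.single i (1 : ℝ)) '' S) ⊆
      {x : EuclideanSpace ℝ (Fin m) | (∀ i ∉ S, x i = 0) ∧ ∑ i ∈ S, x i = 1} := by
    apply convexHull_min
    · rintro x ⟨j, hj, rfl⟩
      simp only [Finset.coe_sort_coe, Set.mem_setOf_eq]
      constructor
      · intro i hi
        rw [EuclideanSpace.single_apply]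
        have : i ≠ j := fun h => hi (h ▸ hj)
        simp [this]
      · rw [Finset.sum_congr rfl (fun i _ => EuclideanSpace.single_apply j 1 i)]
        simp [Finset.mem_coe.mp hj]
    · intro x hx y hy a b ha hb hab
      simp only [Set.mem_setOf_eq] at hx hy ⊢
      constructor
      · intro i hi
        have : (a • x + b • y) i = a * x i + b * y i := by
          simp [PiLp.add_apply, PiLp.smul_apply, smul_eq_mul]
        rw [this, hx.1 i hi, hy.1 i hi]; ring
      · have : ∀ i ∈ S, (a • x + b • y) i = a * x i + b * y i := by
          intro i _; simp [PiLp.add_apply, PiLp.smul_apply, smul_eq_mul]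
        rw [Finset.sum_congr rfl this, Finset.sum_add_distrib, ← Finset.mul_sum,
          ← Finset.mul_sum, hx.2, hy.2]
        simpa using hab
  exact hsub hc

lemma centroid_mem {m : ℕ} (S : Finset (Fin m)) (hS : S.Nonempty) :
    basisCentroid S ∈
      convexHull ℝ ((fun i : Fin m => EuclideanSpace.single i (1 : ℝ)) '' S) := by
  have h : S.centerMass (fun _ => (1 : ℝ))
      (fun i : Fin m => EuclideanSpace.single i (1 : ℝ)) ∈
      convexHull ℝ ((fun i : Fin m => EuclideanSpace.single i (1 : ℝ)) '' S) := by
    apply Finset.centerMass_mem_convexHull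
    · intro i _; exact zero_le_one
    · rw [Finset.sum_const, nsmul_eq_mul, mul_one]
      exact Nat.cast_pos.2 (Finset.card_pos.2 hS)
    · intro i hi; exact Set.mem_image_of_mem _ hi
  have : S.centerMass (fun _ => (1 : ℝ))
      (fun i : Fin m => EuclideanSpace.single i (1 : ℝ)) = basisCentroid S := by
    rw [Finset.centerMass, basisCentroid]
    simp
  rwa [this] at h

lemma centroid_apply {m : ℕ} (S : Finset (Fin m)) (i : Fin m) :
    basisCentroid S i = (S.card : ℝ)⁻¹ * (if i ∈ S then 1 else 0) := by
  rw [basisCentroid]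
  have : (∑ j ∈ S, EuclideanSpace.single j (1 : ℝ)) i
      = ∑ j ∈ S, (if i = j then (1:ℝ) else 0) := by
    induction S using Finset.induction with
    | empty => simp
    | insert _ _ h ih =>
      rw [Finset.sum_insert h, Finset.sum_insert h, PiLp.add_apply, ih,
        EuclideanSpace.single_apply]
  rw [PiLp.smul_apply, this, smul_eq_mul]
  congr 1
  simp

lemma norm_centroid_sub {m : ℕ} (S T : Finset (Fin m)) (hS : S.Nonempty) (hT : T.Nonempty)
    (hST : Disjoint S T) :
    ‖basisCentroid S - basisCentroid T‖ = Real.sqrt (1 / S.card + 1 / T.card) := by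
  rw [EuclideanSpace.norm_eq]
  congr 1
  have key : ∀ i, ‖(basisCentroid S - basisCentroid T) i‖ ^ 2
      = (if i ∈ S then ((S.card : ℝ)⁻¹) ^ 2 else 0)
        + (if i ∈ T then ((T.card : ℝ)⁻¹) ^ 2 else 0) := by
    intro i
    rw [PiLp.sub_apply, centroid_apply, centroid_apply, Real.norm_eq_abs, sq_abs]
    by_cases hiS : i ∈ S
    · simp [hiS, Finset.disjoint_left.mp hST hiS]
    · by_cases hiT : i ∈ T
      · simp [hiS, hiT, neg_sq]
      · simp [hiS, hiT]
  rw [Finset.sum_congr rfl (fun i _ => key i), Finset.sum_add_distrib,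
    Finset.sum_ite_mem, Finset.sum_ite_mem, Finset.univ_inter, Finset.univ_inter,
    Finset.sum_const, Finset.sum_const, nsmul_eq_mul, nsmul_eq_mul]
  have h1 : (S.card : ℝ) ≠ 0 := Nat.cast_ne_zero.2 (Finset.card_pos.2 hS).ne'
  have h2 : (T.card : ℝ) ≠ 0 := Nat.cast_ne_zero.2 (Finset.card_pos.2 hT).ne'
  field_simp

lemma dist_lower {m : ℕ} (S T : Finset (Fin m)) (hS : S.Nonempty) (hT : T.Nonempty)
    (hST : Disjoint S T) {c d : EuclideanSpace ℝ (Fin m)}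
    (hc : c ∈ convexHull ℝ ((fun i : Fin m => EuclideanSpace.single i (1 : ℝ)) '' S))
    (hd : d ∈ convexHull ℝ ((fun i : Fin m => EuclideanSpace.single i (1 : ℝ)) '' T)) :
    Real.sqrt (1 / S.card + 1 / T.card) ≤ dist c d := by
  obtain ⟨hc0, hc1⟩ := coordProps S hc
  obtain ⟨hd0, hd1⟩ := coordProps T hd
  rw [dist_eq_norm, EuclideanSpace.norm_eq]
  apply Real.sqrt_le_sqrt
  have hterm : ∀ i, ‖(c - d) i‖ ^ 2 = (c i - d i) ^ 2 := fun i => by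
    rw [PiLp.sub_apply, Real.norm_eq_abs, sq_abs]
  rw [Finset.sum_congr rfl (fun i _ => hterm i)]
  have hsplit : ∑ i ∈ S, (c i - d i) ^ 2 + ∑ i ∈ T, (c i - d i) ^ 2
      ≤ ∑ i, (c i - d i) ^ 2 := by
    rw [← Finset.sum_union hST]
    exact Finset.sum_le_sum_of_subset_of_nonneg (Finset.subset_univ _)
      (fun i _ _ => sq_nonneg _)
  refine le_trans (add_le_add ?_ ?_) hsplit
  · have he : ∀ i ∈ S, (c i - d i) ^ 2 = (c i) ^ 2 := fun i hi => by
      rw [hd0 i (Finset.disjoint_left.mp hST hi)]; ring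
    rw [Finset.sum_congr rfl he]
    have hcs := sq_sum_le_card_mul_sum_sq (s := S) (f := fun i => c i)
    rw [hc1, one_pow] at hcs
    have hpos : (0 : ℝ) < S.card := Nat.cast_pos.2 (Finset.card_pos.2 hS)
    rw [div_le_iff₀ hpos]
    nlinarith [hcs]
  · have he : ∀ i ∈ T, (c i - d i) ^ 2 = (d i) ^ 2 := fun i hi => by
      rw [hc0 i (Finset.disjoint_right.mp hST hi)]; ring
    rw [Finset.sum_congr rfl he]
    have hcs := sq_sum_le_card_mul_sum_sq (s := T) (f := fun i => d i)
    rw [hd1, one_pow] at hcs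
    have hpos : (0 : ℝ) < T.card := Nat.cast_pos.2 (Finset.card_pos.2 hT)
    rw [div_le_iff₀ hpos]
    nlinarith [hcs]

/-- For nonempty disjoint subsets `S, T` of the standard basis of `ℝ^m`, the distance
between `conv(S)` and `conv(T)` is attained at the centroids and equals
`√(1/|S| + 1/|T|)`. -/
theorem dist_convexHull_basis_subsets {m : ℕ} (S T : Finset (Fin m))
    (hS : S.Nonempty) (hT : T.Nonempty) (hST : Disjoint S T) :
    setDist (convexHull ℝ ((fun i : Fin m => EuclideanSpace.single i (1 : ℝ)) '' S))
        (convexHull ℝ ((fun i : Fin m => EuclideanSpace.single i (1 : ℝ)) '' T)) =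
      ‖basisCentroid S - basisCentroid T‖ ∧
    ‖basisCentroid S - basisCentroid T‖ =
      Real.sqrt (1 / S.card + 1 / T.card) := by
  have hnorm := norm_centroid_sub S T hS hT hST
  refine ⟨?_, hnorm⟩
  apply le_antisymm
  · apply csInf_le
    · exact ⟨0, fun r ⟨c, _, d, _, hr⟩ => hr ▸ dist_nonneg⟩
    · exact ⟨_, centroid_mem S hS, _, centroid_mem T hT, (dist_eq_norm _ _).symm⟩
  · apply le_csInf
    · exact ⟨_, _, centroid_mem S hS, _, centroid_mem T hT, rfl⟩
    · rintro r ⟨c, hc, d, hd, rfl⟩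
      rw [hnorm]
      exact dist_lower S T hS hT hST hc hd
end
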